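/- arXiv:1908.05954 — 3 statements merged into one kernel-verified Lean document; each statement's English description precedes it below -/
import Mathlib

section
/- Every Sturmian sequence is recurrent: each factor of a Sturmian sequence occurs at infinitely many positions in the sequence. -/
/-- The word `v` occurs in the sequence `w` at position `k`. -/
def occursAt (w : ℕ → Fin 2) (v : List (Fin 2)) (k : ℕ) : Prop :=
  ∀ i < v.length, v.getD i 0 = w (k + i)

/-- Subword complexity of a sequence over `{1,2}`. -/
noncomputable def complexityFn (w : ℕ → Fin 2) (n : ℕ) : ℕ :=
  Set.ncard {v : Fin n → Fin 2 | ∃ k : ℕ, ∀ i : Fin n, v i = w (k + i)}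

/-- A Sturmian sequence: complexity `n + 1` for all `n`. -/
def IsSturmian (w : ℕ → Fin 2) : Prop := ∀ n, complexityFn w n = n + 1

/-! If a factor `u` of length `n` of a Sturmian sequence `w` did not occur beyond position `N`,
the tail of `w` from `N` on would have at most `n` factors of length `n`. By the Morse–Hedlund
argument its complexity is then bounded: some length `j` determines the next letter, and from
there on the number of factors stops growing. But the complexity of `w` exceeds that of its tail
by at most `N`, contradicting `p_w(m) = m + 1`. -/

open Set

namespace FactorComplexity

variable {α : Type*} (w : ℕ → α)

def factors (n : ℕ) : Set (Fin n → α) :=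
  range fun k (i : Fin n) => w (k + i)

lemma factors_eq_image_succ (n : ℕ) :
    factors w n = (· ∘ Fin.castSucc) '' factors w (n + 1) := by
  rw [factors, factors, ← range_comp]
  rfl

def NextDetermined (n : ℕ) : Prop :=
  ∀ k k', (∀ i < n, w (k + i) = w (k' + i)) → w (k + n) = w (k' + n)

variable {w}

lemma NextDetermined.mono {n m : ℕ} (h : NextDetermined w n) (hnm : n ≤ m) :
    NextDetermined w m := by
  obtain ⟨d, rfl⟩ := Nat.exists_eq_add_of_le hnm
  intro k k' hkk'
  have := h (k + d) (k' + d) fun i hi => by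
    simpa only [add_assoc] using hkk' (d + i) (by omega)
  simpa only [add_assoc, add_comm n d] using this

variable (w)

lemma injOn_restrict_factors_iff (n : ℕ) :
    InjOn (· ∘ Fin.castSucc) (factors w (n + 1)) ↔ NextDetermined w n := by
  constructor
  · intro h k k' hkk'
    exact congrFun (h ⟨k, rfl⟩ ⟨k', rfl⟩ (funext fun i => hkk' i i.isLt)) (Fin.last n)
  · rintro h _ ⟨k, rfl⟩ _ ⟨k', rfl⟩ hkk'
    funext i
    induction i using Fin.lastCases with
    | last => exact h k k' fun i hi => congrFun hkk' ⟨i, hi⟩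
    | cast i => exact congrFun hkk' i

variable [Finite α]

lemma ncard_factors_mono : Monotone fun n => (factors w n).ncard :=
  monotone_nat_of_le_succ fun n => by
    rw [factors_eq_image_succ w n]
    exact ncard_image_le (toFinite _)

lemma ncard_factors_succ_le_iff (n : ℕ) :
    (factors w (n + 1)).ncard ≤ (factors w n).ncard ↔ NextDetermined w n := by
  rw [← injOn_restrict_factors_iff, ← ncard_image_iff (toFinite _), ← factors_eq_image_succ]
  exact ⟨fun h => le_antisymm (ncard_factors_mono w n.le_succ) h, Eq.ge⟩

lemma ncard_factors_le_of_nextDetermined {n : ℕ} (h : NextDetermined w n) (m : ℕ) :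
    (factors w m).ncard ≤ (factors w n).ncard := by
  rcases le_total m n with hmn | hnm
  · exact ncard_factors_mono w hmn
  induction m, hnm using Nat.le_induction with
  | base => exact le_rfl
  | succ m hnm ih => exact ((ncard_factors_succ_le_iff w m).2 (h.mono hnm)).trans ih

lemma exists_nextDetermined_of_ncard_factors_le {n : ℕ} (h : (factors w n).ncard ≤ n) :
    ∃ j, NextDetermined w j := by
  by_contra! hnot
  have grow : ∀ j, j + 1 ≤ (factors w j).ncard := by
    intro j
    induction j with
    | zero => exact (ncard_pos (toFinite _)).2 (range_nonempty _)
    | succ j ih =>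
      have := (ncard_factors_succ_le_iff w j).not.2 (hnot j)
      omega
  have := grow n
  omega

/-- The easy half of the Morse–Hedlund theorem. -/
lemma bddAbove_ncard_factors_of_ncard_factors_le {n : ℕ} (h : (factors w n).ncard ≤ n) :
    BddAbove (range fun m => (factors w m).ncard) := by
  obtain ⟨j, hj⟩ := exists_nextDetermined_of_ncard_factors_le w h
  exact ⟨_, forall_mem_range.2 (ncard_factors_le_of_nextDetermined w hj)⟩

lemma ncard_factors_le_add_shift (N m : ℕ) :
    (factors w m).ncard ≤ N + (factors (fun i => w (N + i)) m).ncard := by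
  set initial := (fun k (i : Fin m) => w (k + i)) '' Iio N
  have hcover : factors w m ⊆ initial ∪ factors (fun i => w (N + i)) m := by
    rintro _ ⟨k, rfl⟩
    rcases lt_or_ge k N with hk | hk
    · exact Or.inl ⟨k, hk, rfl⟩
    · refine Or.inr ⟨k - N, funext fun i => ?_⟩
      simp only
      congr 1
      omega
  calc (factors w m).ncard
      ≤ (initial ∪ factors (fun i => w (N + i)) m).ncard := ncard_le_ncard hcover (toFinite _)
    _ ≤ initial.ncard + (factors (fun i => w (N + i)) m).ncard := ncard_union_le _ _
    _ ≤ N + (factors (fun i => w (N + i)) m).ncard := by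
      gcongr
      exact (ncard_image_le (finite_Iio N)).trans (by simp)

lemma mem_factors_shift {n : ℕ} (hw : ¬BddAbove (range fun m => (factors w m).ncard))
    (hn : (factors w n).ncard ≤ n + 1) {u : Fin n → α} (hu : u ∈ factors w n) (N : ℕ) :
    u ∈ factors (fun i => w (N + i)) n := by
  by_contra hN
  have hsub : factors (fun i => w (N + i)) n ⊆ factors w n := by
    rintro _ ⟨k, rfl⟩
    exact ⟨N + k, funext fun i => by simp only [add_assoc]⟩
  have hlt := ncard_lt_ncard ((ssubset_iff_of_subset hsub).2 ⟨u, hu, hN⟩) (toFinite _)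
  have htail : (factors (fun i => w (N + i)) n).ncard ≤ n := by omega
  obtain ⟨C, hC⟩ := bddAbove_ncard_factors_of_ncard_factors_le _ htail
  exact hw ⟨N + C, forall_mem_range.2 fun m =>
    (ncard_factors_le_add_shift w N m).trans (add_le_add_right (hC ⟨m, rfl⟩) N)⟩

end FactorComplexity

open FactorComplexity

lemma ncard_factors_of_isSturmian {w : ℕ → Fin 2} (hw : IsSturmian w) (n : ℕ) :
    (factors w n).ncard = n + 1 := by
  rw [← hw n, complexityFn, factors]
  congr 1
  ext u
  simp only [mem_range, mem_ofPred_eq, funext_iff, eq_comm]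

/-- Every Sturmian sequence is recurrent: each factor occurs at infinitely many positions. -/
theorem stmt1 (w : ℕ → Fin 2) (hw : IsSturmian w) (v : List (Fin 2))
    (hv : ∃ k, occursAt w v k) : ∀ N : ℕ, ∃ k ≥ N, occursAt w v k := by
  intro N
  have hunbounded : ¬BddAbove (range fun m => (factors w m).ncard) := by
    rintro ⟨C, hC⟩
    have := hC ⟨C, rfl⟩
    simp only [ncard_factors_of_isSturmian hw] at this
    omega
  have hu : (fun i : Fin v.length => v.getD i 0) ∈ factors w v.length :=
    hv.imp fun k hk => funext fun i => (hk i i.isLt).symm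
  obtain ⟨k, hk⟩ := mem_factors_shift w hunbounded (ncard_factors_of_isSturmian hw _).le hu N
  exact ⟨N + k, N.le_add_right k, fun i hi => by
    simpa only [add_assoc] using (congrFun hk ⟨i, hi⟩).symm⟩
end

section
/- Let w be a Sturmian sequence with an S-adic coding sequence (σ_{i_n}) of Sturmian substitutions whose sequence of incidence matrices (M_{i_n}) has a generalized right eigenvector u ∈ ℝ²_{>0}. Then w has uniform letter frequencies, and the frequency vector equals u/‖u‖₁, i.e., for each letter a ∈ {1,2}, the ratio |w_k⋯w_{k+ℓ−1}|_a/ℓ converges to u_a/‖u‖₁ as ℓ → ∞, uniformly in k. -/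
/-- The Sturmian substitutions: `σ₁ : 1 ↦ 1, 2 ↦ 21` and `σ₂ : 1 ↦ 12, 2 ↦ 2`
(letters `1, 2` are `0, 1 : Fin 2`). -/
def sturmSub (j : Fin 2) (a : Fin 2) : List (Fin 2) :=
  if j = 0 then (if a = 0 then [0] else [1, 0]) else (if a = 0 then [0, 1] else [1])

/-- The incidence matrices `M₁ = [[1,1],[0,1]]`, `M₂ = [[1,0],[1,1]]`. -/
noncomputable def sturmMat (j : Fin 2) : Matrix (Fin 2) (Fin 2) ℝ :=
  if j = 0 then !![1, 1; 0, 1] else !![1, 0; 1, 1]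

/-- `σ_{i_0} ∘ ⋯ ∘ σ_{i_{n-1}}` applied to the letter `a`. -/
def sturmWord (i : ℕ → Fin 2) : ℕ → Fin 2 → List (Fin 2)
  | 0, a => [a]
  | n + 1, a => (sturmSub (i n) a).flatMap (sturmWord i n)

/-!
Row `b`, column `c` of `M_{i_0} ⋯ M_{i_{n-1}}` is the number of letters `b` in
`σ_{i_0} ∘ ⋯ ∘ σ_{i_{n-1}}(c)`. The slices of the nested cones `M_{i_0} ⋯ M_{i_n} ℝ²_{≥0}` by the
simplex are nested intervals spanned by the normalised columns; as the cones shrink to `ℝ₊ u`, the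
intervals shrink to the point `u₀ / (u₀ + u₁)`. So for large `m` every level-`m` block
`σ_{i_0} ∘ ⋯ ∘ σ_{i_{m-1}}(c)` has letter frequencies within `ε` of `u / ‖u‖₁`. Every factor
of `w` is a factor of a concatenation of level-`m` blocks, i.e. a short piece, whole blocks, and
another short piece; the short pieces change the discrepancy `|v|_a - ρ |v|` only by a bounded
amount, which gives frequencies converging uniformly in the position.
-/

open Filter Topology Set

section Blocks

variable {α β : Type*} {f : β → List α} {B : ℕ}

theorem exists_eq_flatMap_append_of_prefix (hB : ∀ c, (f c).length ≤ B) {cs : List β}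
    {q : List α} (h : q <+: cs.flatMap f) :
    ∃ ds : List β, ∃ p, q = ds.flatMap f ++ p ∧ p.length ≤ B := by
  induction cs generalizing q with
  | nil => exact ⟨[], q, by simp, by simp_all⟩
  | cons c cs ih =>
    obtain ⟨t, ht⟩ := h
    rcases List.append_eq_append_iff.1 (ht.trans (List.flatMap_cons ..)) with
      ⟨r, hc, -⟩ | ⟨r, rfl, hr⟩
    · exact ⟨[], q, by simp, (hc ▸ List.prefix_append q r).length_le.trans (hB c)⟩
    · obtain ⟨ds, p, rfl, hp⟩ := ih ⟨t, hr.symm⟩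
      exact ⟨c :: ds, p, by simp, hp⟩

theorem exists_eq_append_flatMap_append_of_infix (hB : ∀ c, (f c).length ≤ B) {cs : List β}
    {v : List α} (h : v <:+: cs.flatMap f) :
    ∃ s, ∃ ds : List β, ∃ p, v = s ++ ds.flatMap f ++ p ∧ s.length ≤ B ∧ p.length ≤ B := by
  induction cs with
  | nil => exact ⟨[], [], [], by simpa using h, by simp, by simp⟩
  | cons c cs ih =>
    rcases List.infix_append_iff.1 (List.flatMap_cons .. ▸ h) with h | h | ⟨s, q, rfl, hs, hq⟩
    · exact ⟨v, [], [], by simp, h.length_le.trans (hB c), by simp⟩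
    · exact ih h
    · obtain ⟨ds, p, rfl, hp⟩ := exists_eq_flatMap_append_of_prefix hB hq
      exact ⟨s, ds, p, by simp, hs.length_le.trans (hB c), hp⟩

end Blocks

theorem List.sum_count_eq_length {α : Type*} [Fintype α] [DecidableEq α] (l : List α) :
    ∑ b, l.count b = l.length :=
  (Finset.sum_subset (Finset.subset_univ l.toFinset)
    fun _ _ hb => List.count_eq_zero.2 (by simpa using hb)).symm.trans
    (List.sum_toFinset_count_eq_length l)

section Discrepancy

variable {α β : Type*} [DecidableEq α] (a : α) (ρ : ℝ)

def discrepancy (l : List α) : ℝ := l.count a - ρ * l.length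

@[simp]
theorem discrepancy_append (l₁ l₂ : List α) :
    discrepancy a ρ (l₁ ++ l₂) = discrepancy a ρ l₁ + discrepancy a ρ l₂ := by
  simp only [discrepancy, List.count_append, List.length_append]; push_cast; ring

theorem discrepancy_div_length {l : List α} (hl : l ≠ []) :
    discrepancy a ρ l / l.length = l.count a / l.length - ρ := by
  have : (l.length : ℝ) ≠ 0 := by simpa using hl
  rw [discrepancy, sub_div, mul_div_cancel_right₀ _ this]

theorem abs_discrepancy_le (l : List α) : |discrepancy a ρ l| ≤ (1 + |ρ|) * l.length := by
  have hcount : (l.count a : ℝ) ≤ l.length := by exact_mod_cast List.count_le_length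
  calc |discrepancy a ρ l| ≤ |(l.count a : ℝ)| + |ρ * l.length| := abs_sub _ _
    _ ≤ (1 + |ρ|) * l.length := by rw [abs_mul, Nat.abs_cast, Nat.abs_cast]; linarith

variable {a ρ} {f : β → List α} {δ : ℝ}

theorem abs_discrepancy_flatMap_le (hf : ∀ c, |discrepancy a ρ (f c)| ≤ δ * (f c).length)
    (cs : List β) : |discrepancy a ρ (cs.flatMap f)| ≤ δ * (cs.flatMap f).length := by
  induction cs with
  | nil => simp [discrepancy]
  | cons c cs ih =>
    simp only [List.flatMap_cons, discrepancy_append, List.length_append, Nat.cast_add, mul_add]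
    exact (abs_add_le _ _).trans (add_le_add (hf c) ih)

theorem abs_discrepancy_le_of_infix_flatMap {B : ℕ} (hB : ∀ c, (f c).length ≤ B) (hδ : 0 ≤ δ)
    (hf : ∀ c, |discrepancy a ρ (f c)| ≤ δ * (f c).length) {cs : List β} {v : List α}
    (hv : v <:+: cs.flatMap f) : |discrepancy a ρ v| ≤ δ * v.length + 2 * (1 + |ρ|) * B := by
  obtain ⟨s, ds, p, rfl, hs, hp⟩ := exists_eq_append_flatMap_append_of_infix hB hv
  have hρ : 0 ≤ 1 + |ρ| := by positivity
  have hs' := (abs_discrepancy_le a ρ s).trans (mul_le_mul_of_nonneg_left (Nat.cast_le.2 hs) hρ)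
  have hp' := (abs_discrepancy_le a ρ p).trans (mul_le_mul_of_nonneg_left (Nat.cast_le.2 hp) hρ)
  have hds := abs_discrepancy_flatMap_le hf ds
  have hlen : (((s ++ ds.flatMap f) ++ p).length : ℝ) =
      s.length + (ds.flatMap f).length + p.length := by simp only [List.length_append, Nat.cast_add]
  rw [discrepancy_append, discrepancy_append, hlen]
  calc _ ≤ |discrepancy a ρ s| + |discrepancy a ρ (ds.flatMap f)| + |discrepancy a ρ p| :=
        abs_add_three _ _ _
    _ ≤ _ := by nlinarith [Nat.cast_nonneg (α := ℝ) s.length, Nat.cast_nonneg (α := ℝ) p.length]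

theorem abs_discrepancy_le_iff {l : List α} (hl : l ≠ []) :
    |discrepancy a ρ l| ≤ δ * l.length ↔ |(l.count a : ℝ) / l.length - ρ| ≤ δ := by
  rw [← discrepancy_div_length a ρ hl, abs_div, Nat.abs_cast,
    div_le_iff₀ (by exact_mod_cast List.length_pos_of_ne_nil hl)]

end Discrepancy

section Windows

variable {α : Type*} (w : ℕ → α) (k ℓ : ℕ)

def window : List α := (List.range ℓ).map fun j => w (k + j)

@[simp]
theorem length_window : (window w k ℓ).length = ℓ := by simp [window]

theorem ncard_eq_count_window [DecidableEq α] (a : α) :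
    {j | j < ℓ ∧ w (k + j) = a}.ncard = (window w k ℓ).count a := by
  have : {j | j < ℓ ∧ w (k + j) = a} = ↑((Finset.range ℓ).filter fun j => w (k + j) = a) := by
    ext j; simp
  rw [this, Set.ncard_coe_finset, window, List.count, List.countP_map,
    List.countP_eq_length_filter]
  -- `x == a` unfolds to `decide (x = a)` for the `BEq` instance coming from `DecidableEq`
  rfl

end Windows

theorem occursAt_window (w : ℕ → Fin 2) (k ℓ : ℕ) : occursAt w (window w k ℓ) k := by
  intro j hj
  simp_all [window]

theorem exists_abs_count_window_div_sub_lt {α : Type*} [DecidableEq α] {w : ℕ → α} {a : α}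
    {ρ δ ε C : ℝ} (hδε : δ < ε) (h : ∀ k ℓ, |discrepancy a ρ (window w k ℓ)| ≤ δ * ℓ + C) :
    ∃ L : ℕ, ∀ ℓ ≥ L, ∀ k, |((window w k ℓ).count a : ℝ) / ℓ - ρ| < ε := by
  obtain ⟨L, hL⟩ := exists_nat_gt (C / (ε - δ))
  refine ⟨L + 1, fun ℓ hℓ k => ?_⟩
  have hℓ0 : (0 : ℝ) < ℓ := by exact_mod_cast (by omega : 0 < ℓ)
  have hC : C < (ε - δ) * ℓ := by
    rw [← div_lt_iff₀' (sub_pos.2 hδε)]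
    exact hL.trans (by exact_mod_cast (by omega : L < ℓ))
  have hne : window w k ℓ ≠ [] := List.ne_nil_of_length_pos (by simpa using hℓ0)
  have hdiv := discrepancy_div_length a ρ hne
  rw [length_window] at hdiv
  rw [← hdiv, abs_div, Nat.abs_cast, div_lt_iff₀ hℓ0]
  linarith [h k ℓ]

theorem exists_sturmSub_eq_cons (j a : Fin 2) : ∃ t, sturmSub j a = a :: t := by
  fin_cases j <;> fin_cases a <;> simp [sturmSub]

theorem sturmMat_nonneg (j b c : Fin 2) : 0 ≤ sturmMat j b c := by
  fin_cases j <;> fin_cases b <;> fin_cases c <;> simp [sturmMat]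

theorem count_flatMap_sturmSub (W : Fin 2 → List (Fin 2)) (j a b : Fin 2) :
    (((sturmSub j a).flatMap W).count b : ℝ) = ∑ c, ((W c).count b : ℝ) * sturmMat j c a := by
  fin_cases j <;> fin_cases a <;> simp [sturmSub, sturmMat, Fin.sum_univ_two, add_comm]

noncomputable def sturmMatProd (i : ℕ → Fin 2) (n : ℕ) : Matrix (Fin 2) (Fin 2) ℝ :=
  ((List.range n).map fun k => sturmMat (i k)).prod

section SturmianWords

variable (i : ℕ → Fin 2)

theorem sturmWord_add (m : ℕ) : ∀ d a,
    sturmWord i (m + d) a = (sturmWord (fun k => i (k + m)) d a).flatMap (sturmWord i m)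
  | 0, a => by simp [sturmWord]
  | d + 1, a => by
    rw [← add_assoc, sturmWord, sturmWord, List.flatMap_assoc, add_comm d m]
    exact congrArg (List.flatMap · _) (funext (sturmWord_add m d))

theorem sturmWord_prefix_succ (n : ℕ) (a : Fin 2) : sturmWord i n a <+: sturmWord i (n + 1) a := by
  obtain ⟨t, ht⟩ := exists_sturmSub_eq_cons (i n) a
  simp [sturmWord, ht]

theorem sturmWord_prefix_of_le {m n : ℕ} (h : m ≤ n) (a : Fin 2) :
    sturmWord i m a <+: sturmWord i n a := by
  induction n, h using Nat.le_induction with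
  | base => exact List.prefix_refl _
  | succ n _ ih => exact ih.trans (sturmWord_prefix_succ i n a)

theorem sturmWord_ne_nil (n : ℕ) (a : Fin 2) : sturmWord i n a ≠ [] :=
  List.ne_nil_of_length_pos (sturmWord_prefix_of_le i n.zero_le a).length_le

theorem exists_infix_flatMap_sturmWord (n m : ℕ) (a : Fin 2) :
    ∃ cs : List (Fin 2), sturmWord i n a <:+: cs.flatMap (sturmWord i m) := by
  obtain ⟨d, hd⟩ := Nat.exists_eq_add_of_le (le_max_right n m)
  refine ⟨sturmWord (fun k => i (k + m)) d a, ?_⟩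
  rw [← sturmWord_add, ← hd]
  exact (sturmWord_prefix_of_le i (le_max_left n m) a).isInfix

theorem sturmMatProd_succ (n : ℕ) :
    sturmMatProd i (n + 1) = sturmMatProd i n * sturmMat (i n) := by
  simp [sturmMatProd, List.range_succ]

theorem count_sturmWord (n : ℕ) (a b : Fin 2) :
    ((sturmWord i n a).count b : ℝ) = sturmMatProd i n b a := by
  induction n generalizing a with
  | zero =>
    simp [sturmWord, sturmMatProd, Matrix.one_apply, List.count_singleton, eq_comm (a := a)]
  | succ n ih =>
    simp only [sturmWord, count_flatMap_sturmSub, ih, sturmMatProd_succ, Matrix.mul_apply]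

theorem length_sturmWord (n : ℕ) (a : Fin 2) :
    ((sturmWord i n a).length : ℝ) = sturmMatProd i n 0 a + sturmMatProd i n 1 a := by
  rw [← List.sum_count_eq_length, Nat.cast_sum, Fin.sum_univ_two, count_sturmWord,
    count_sturmWord]

theorem sturmMatProd_col_sum_pos (n : ℕ) (c : Fin 2) :
    0 < sturmMatProd i n 0 c + sturmMatProd i n 1 c := by
  rw [← length_sturmWord]
  exact_mod_cast List.length_pos_of_ne_nil (sturmWord_ne_nil i n c)

end SturmianWords

section NestedIntervals

variable {α : Type*} [ConditionallyCompleteLinearOrder α] [TopologicalSpace α] [OrderTopology α]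
  {f g : ℕ → α} {p : α}

theorem tendsto_of_antitone_Icc (h : Antitone fun n => Icc (f n) (g n)) (hfg : ∀ n, f n ≤ g n)
    (hp : ⋂ n, Icc (f n) (g n) ⊆ {p}) : Tendsto f atTop (𝓝 p) ∧ Tendsto g atTop (𝓝 p) := by
  have hf : Monotone f := fun _ n hmn => ((Icc_subset_Icc_iff (hfg n)).1 (h hmn)).1
  have hg : Antitone g := fun _ n hmn => ((Icc_subset_Icc_iff (hfg n)).1 (h hmn)).2
  have hle : ∀ m n, f m ≤ g n := hf.forall_le_of_antitone hg hfg
  have hbddf : BddAbove (range f) := ⟨g 0, forall_mem_range.2 fun m => hle m 0⟩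
  have hbddg : BddBelow (range g) := ⟨f 0, forall_mem_range.2 fun n => hle 0 n⟩
  have hsup : ⨆ n, f n = p := hp (hf.ciSup_mem_iInter_Icc_of_antitone hg hfg)
  have hinf : ⨅ n, g n = p :=
    hp (mem_iInter.2 fun n => ⟨le_ciInf fun m => hle n m, ciInf_le hbddg n⟩)
  exact ⟨hsup ▸ tendsto_atTop_ciSup hf hbddf, hinf ▸ tendsto_atTop_ciInf hg hbddg⟩

theorem tendsto_of_antitone_uIcc (h : Antitone fun n => uIcc (f n) (g n))
    (hp : ⋂ n, uIcc (f n) (g n) ⊆ {p}) : Tendsto f atTop (𝓝 p) ∧ Tendsto g atTop (𝓝 p) := by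
  obtain ⟨hinf, hsup⟩ := tendsto_of_antitone_Icc h (fun _ => inf_le_sup) hp
  exact ⟨tendsto_of_tendsto_of_tendsto_of_le_of_le hinf hsup (fun _ => inf_le_left)
      fun _ => le_sup_left,
    tendsto_of_tendsto_of_tendsto_of_le_of_le hinf hsup (fun _ => inf_le_right)
      fun _ => le_sup_right⟩

end NestedIntervals

section Cones

noncomputable def colRatio (V : Matrix (Fin 2) (Fin 2) ℝ) (c : Fin 2) : ℝ :=
  V 0 c / (V 0 c + V 1 c)

theorem vecCons_mem_mulVec_image_iff {V : Matrix (Fin 2) (Fin 2) ℝ} (hV : ∀ c, 0 < V 0 c + V 1 c)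
    (s : ℝ) : ![s, 1 - s] ∈ V.mulVec '' {x | ∀ j, 0 ≤ x j} ↔
      s ∈ uIcc (colRatio V 0) (colRatio V 1) := by
  have h0 := (hV 0).ne'
  have h1 := (hV 1).ne'
  rw [← segment_eq_uIcc]
  constructor
  · rintro ⟨y, hy, hVy⟩
    have e0 : V 0 0 * y 0 + V 0 1 * y 1 = s := by
      simpa [Matrix.mulVec, dotProduct, Fin.sum_univ_two] using congrFun hVy 0
    have e1 : V 1 0 * y 0 + V 1 1 * y 1 = 1 - s := by
      simpa [Matrix.mulVec, dotProduct, Fin.sum_univ_two] using congrFun hVy 1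
    refine ⟨y 0 * (V 0 0 + V 1 0), y 1 * (V 0 1 + V 1 1), mul_nonneg (hy 0) (hV 0).le,
      mul_nonneg (hy 1) (hV 1).le, by linarith, ?_⟩
    simp only [colRatio, smul_eq_mul]
    field_simp
    linarith
  · rintro ⟨a, b, ha, hb, hab, rfl⟩
    obtain rfl : b = 1 - a := by linarith
    refine ⟨![a / (V 0 0 + V 1 0), (1 - a) / (V 0 1 + V 1 1)], ?_, ?_⟩
    · intro j
      fin_cases j
      · exact div_nonneg ha (hV 0).le
      · exact div_nonneg hb (hV 1).le
    · ext j
      fin_cases j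
      · simp [Matrix.mulVec, dotProduct, Fin.sum_univ_two, colRatio]
        field_simp
      · simp [Matrix.mulVec, dotProduct, Fin.sum_univ_two, colRatio]
        field_simp
        ring

theorem mul_mulVec_image_subset (A : Matrix (Fin 2) (Fin 2) ℝ) {M : Matrix (Fin 2) (Fin 2) ℝ}
    (hM : ∀ b c, 0 ≤ M b c) :
    (A * M).mulVec '' {x | ∀ j, 0 ≤ x j} ⊆ A.mulVec '' {x | ∀ j, 0 ≤ x j} := by
  rintro _ ⟨y, hy, rfl⟩
  refine ⟨M.mulVec y, fun j => ?_, Matrix.mulVec_mulVec y A M⟩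
  exact (Finset.sum_nonneg fun c _ => mul_nonneg (hM j c) (hy c) : 0 ≤ ∑ c, M j c * y c)

end Cones

section Eigenvector

variable {i : ℕ → Fin 2} {u : Fin 2 → ℝ}

theorem tendsto_colRatio_sturmMatProd
    (heig : (⋂ n : ℕ,
        (fun x => (((List.range (n + 1)).map fun k => sturmMat (i k)).prod).mulVec x) ''
          {x : Fin 2 → ℝ | ∀ j, 0 ≤ x j})
      = {x : Fin 2 → ℝ | ∃ t : ℝ, 0 ≤ t ∧ x = t • u}) (c : Fin 2) :
    Tendsto (fun n => colRatio (sturmMatProd i n) c) atTop (𝓝 (u 0 / (u 0 + u 1))) := by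
  -- `I n` is the slice of the `n`-th cone by the simplex, read through the first coordinate
  let I n := uIcc (colRatio (sturmMatProd i (n + 1)) 0) (colRatio (sturmMatProd i (n + 1)) 1)
  have hmem n s := vecCons_mem_mulVec_image_iff (sturmMatProd_col_sum_pos i (n + 1)) s
  have hanti : Antitone I := antitone_nat_of_succ_le fun n s hs =>
    (hmem n s).1 <| mul_mulVec_image_subset _ (sturmMat_nonneg _) <|
      sturmMatProd_succ i (n + 1) ▸ (hmem (n + 1) s).2 hs
  have hsingle : ⋂ n, I n ⊆ {u 0 / (u 0 + u 1)} := by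
    intro s hs
    have hcone : ![s, 1 - s] ∈ ⋂ n : ℕ, (sturmMatProd i (n + 1)).mulVec '' {x | ∀ j, 0 ≤ x j} :=
      mem_iInter.2 fun n => (hmem n s).2 (mem_iInter.1 hs n)
    obtain ⟨t, -, ht⟩ := heig ▸ hcone
    have h0 : s = t * u 0 := by simpa using congrFun ht 0
    have h1 : 1 - s = t * u 1 := by simpa using congrFun ht 1
    have ht' : t = (u 0 + u 1)⁻¹ := eq_inv_of_mul_eq_one_left (by linarith)
    rw [h0, ht', inv_mul_eq_div, mem_singleton_iff]
  obtain ⟨h0, h1⟩ := tendsto_of_antitone_uIcc hanti hsingle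
  fin_cases c
  · exact (tendsto_add_atTop_iff_nat 1).1 h0
  · exact (tendsto_add_atTop_iff_nat 1).1 h1

theorem tendsto_count_div_length_sturmWord (hupos : ∀ j, 0 < u j)
    (heig : (⋂ n : ℕ,
        (fun x => (((List.range (n + 1)).map fun k => sturmMat (i k)).prod).mulVec x) ''
          {x : Fin 2 → ℝ | ∀ j, 0 ≤ x j})
      = {x : Fin 2 → ℝ | ∃ t : ℝ, 0 ≤ t ∧ x = t • u}) (a c : Fin 2) :
    Tendsto (fun n => ((sturmWord i n c).count a : ℝ) / (sturmWord i n c).length) atTop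
      (𝓝 (u a / (u 0 + u 1))) := by
  have hcol := tendsto_colRatio_sturmMatProd heig c
  simp only [count_sturmWord, length_sturmWord]
  fin_cases a
  · exact hcol
  · have hu : u 0 + u 1 ≠ 0 := (add_pos (hupos 0) (hupos 1)).ne'
    have hflip n : sturmMatProd i n 1 c / (sturmMatProd i n 0 c + sturmMatProd i n 1 c) =
        1 - colRatio (sturmMatProd i n) c := by
      rw [colRatio, eq_sub_iff_add_eq, ← add_div, add_comm,
        div_self (sturmMatProd_col_sum_pos i n c).ne']
    simp only [Fin.mk_one, Fin.isValue, hflip]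
    convert tendsto_const_nhds.sub hcol using 2
    field_simp
    ring

end Eigenvector

theorem stmt5_general (w : ℕ → Fin 2) (i : ℕ → Fin 2) (u : Fin 2 → ℝ)
    -- `(σ_{i_n})` is a coding sequence for `w` : `w` has the same language as the
    -- limit sequences `lim_n σ_{i_0} ∘ ⋯ ∘ σ_{i_{n-1}}(a)`
    (hlang : ∀ v : List (Fin 2),
      (∃ k, occursAt w v k) ↔ ∃ n a, v <:+: sturmWord i n a)
    (hupos : ∀ j, 0 < u j)
    -- `u` is a generalized right eigenvector of `(M_{i_n})`
    (heig : (⋂ n : ℕ,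
        (fun x => (((List.range (n + 1)).map fun k => sturmMat (i k)).prod).mulVec x) ''
          {x : Fin 2 → ℝ | ∀ j, 0 ≤ x j})
      = {x : Fin 2 → ℝ | ∃ t : ℝ, 0 ≤ t ∧ x = t • u}) :
    ∀ a : Fin 2, ∀ ε > (0 : ℝ), ∃ L : ℕ, ∀ ℓ ≥ L, ∀ k : ℕ,
      |(Set.ncard {j : ℕ | j < ℓ ∧ w (k + j) = a} : ℝ) / ℓ - u a / (u 0 + u 1)| < ε := by
  intro a ε hε
  set ρ := u a / (u 0 + u 1)
  obtain ⟨m, hm⟩ := (eventually_all.2 fun c => (tendsto_count_div_length_sturmWord hupos heig a c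
    ).eventually (Metric.closedBall_mem_nhds ρ (half_pos hε))).exists
  have hblock c : |discrepancy a ρ (sturmWord i m c)| ≤ ε / 2 * (sturmWord i m c).length :=
    (abs_discrepancy_le_iff (sturmWord_ne_nil i m c)).2 (hm c)
  have hB c : (sturmWord i m c).length ≤ ∑ b, (sturmWord i m b).length :=
    Finset.single_le_sum (f := fun b => (sturmWord i m b).length) (fun _ _ => Nat.zero_le _)
      (Finset.mem_univ c)
  have hwindow k ℓ : |discrepancy a ρ (window w k ℓ)| ≤
      ε / 2 * ℓ + 2 * (1 + |ρ|) * ∑ b, (sturmWord i m b).length := by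
    obtain ⟨n, b, hv⟩ := (hlang _).1 ⟨k, occursAt_window w k ℓ⟩
    obtain ⟨cs, hcs⟩ := exists_infix_flatMap_sturmWord i n m b
    simpa using abs_discrepancy_le_of_infix_flatMap hB (half_pos hε).le hblock (hv.trans hcs)
  obtain ⟨L, hL⟩ := exists_abs_count_window_div_sub_lt (half_lt_self hε) hwindow
  exact ⟨L, fun ℓ hℓ k => ncard_eq_count_window w k ℓ a ▸ hL ℓ hℓ k⟩

/-- A Sturmian sequence with a coding sequence of Sturmian substitutions whose
incidence matrices have a generalized right eigenvector `u` has uniform letter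
frequencies given by `u / ‖u‖₁`. -/
theorem stmt5 (w : ℕ → Fin 2) (i : ℕ → Fin 2) (u : Fin 2 → ℝ)
    (hw : IsSturmian w)
    -- `(σ_{i_n})` is a coding sequence for `w` : `w` has the same language as the
    -- limit sequences `lim_n σ_{i_0} ∘ ⋯ ∘ σ_{i_{n-1}}(a)`
    (hlang : ∀ v : List (Fin 2),
      (∃ k, occursAt w v k) ↔ ∃ n a, v <:+: sturmWord i n a)
    (hupos : ∀ j, 0 < u j)
    -- `u` is a generalized right eigenvector of `(M_{i_n})`
    (heig : (⋂ n : ℕ,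
        (fun x => (((List.range (n + 1)).map fun k => sturmMat (i k)).prod).mulVec x) ''
          {x : Fin 2 → ℝ | ∀ j, 0 ≤ x j})
      = {x : Fin 2 → ℝ | ∃ t : ℝ, 0 ≤ t ∧ x = t • u}) :
    ∀ a : Fin 2, ∀ ε > (0 : ℝ), ∃ L : ℕ, ∀ ℓ ≥ L, ∀ k : ℕ,
      |(Set.ncard {j : ℕ | j < ℓ ∧ w (k + j) = a} : ℝ) / ℓ - u a / (u 0 + u 1)| < ε :=
  stmt5_general w i u hlang hupos heig
end

section
/- Let σ be a primitive and recurrent sequence of unimodular substitutions over an alphabet A with generalized right eigenvector u. Then the Rauzy fractal R_w and each of its subtiles R_w(i) is compact for every w ∈ ℝ^d_{≥0}\{0} if and only if the language L_σ is finitely balanced. -/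
/-!
A limit sequence exists because the systems `(ws n)` satisfying the first `N` desubstitution
relations form a nested sequence of nonempty closed subsets of a compact space, and by
primitivity its factors are exactly the words of `L_σ`.

If `L_σ` is `C`-balanced, the letter counts of prefixes of a limit sequence are additive up to
`C`, so by Fekete's lemma `‖l(p) - |p| α‖ ≤ C` for a frequency vector `α`. Cutting a prefix into
images `σ_{[0,n)}(b)` plus a bounded remainder shows that `α` lies in every cone
`M_{[0,n)} ℝ^d_{≥0}`, hence on `ℝ₊ u`, which `π_{u,w}` kills; so all of `R_w` lies in the compact
image under `π_{u,w}` of the ball of radius `C`.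

Conversely, for `w = (1, …, 1)` the projection does not change the difference of two vectors with
the same coordinate sum, and every factor is a difference of two prefixes, so a bounded `R_w`
bounds the imbalance. On alphabets with at most one letter both sides hold trivially.
-/

/-- The image of an infinite sequence under a (nonerasing) substitution. -/
def subApplyG {d : ℕ} (s : Fin d → List (Fin d)) (u : ℕ → Fin d) (n : ℕ) : Fin d :=
  (((List.range (n + 1)).map u).flatMap s).getD n (u 0)

/-- `w` is a limit sequence for the directive sequence `s`. -/
def IsLimitSeq {d : ℕ} (s : ℕ → Fin d → List (Fin d)) (w : ℕ → Fin d) : Prop :=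
  ∃ ws : ℕ → ℕ → Fin d, ws 0 = w ∧ ∀ n, ws n = subApplyG (s n) (ws (n + 1))

/-- The incidence matrix (over `ℤ`) of the `n`-th substitution. -/
def incZ {d : ℕ} (s : ℕ → Fin d → List (Fin d)) (n : ℕ) : Matrix (Fin d) (Fin d) ℤ :=
  Matrix.of fun i j => ((s n j).count i : ℤ)

/-- The product `M_m ⋯ M_{n-1}` of incidence matrices. -/
def incZProd {d : ℕ} (s : ℕ → Fin d → List (Fin d)) (m n : ℕ) : Matrix (Fin d) (Fin d) ℤ :=
  ((List.range (n - m)).map fun k => incZ s (m + k)).prod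

/-- `σ_{[0,n)}(a)`: the word obtained by applying `σ_0 ∘ ⋯ ∘ σ_{n-1}` to the letter `a`. -/
def sadicWord {d : ℕ} (s : ℕ → Fin d → List (Fin d)) : ℕ → Fin d → List (Fin d)
  | 0, a => [a]
  | n + 1, a => (s n a).flatMap (sadicWord s n)

/-- The language of the directive sequence `σ`. -/
def InLang {d : ℕ} (s : ℕ → Fin d → List (Fin d)) (v : List (Fin d)) : Prop :=
  ∃ n a, v <:+: sadicWord s n a

/-- The projection onto `w^⊥` along `u`. -/
noncomputable def projUW {d : ℕ} (u w x : Fin d → ℝ) : Fin d → ℝ :=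
  x - ((∑ i, x i * w i) / (∑ i, u i * w i)) • u

/-- The abelianization of a word. -/
def abel {d : ℕ} (p : List (Fin d)) : Fin d → ℝ := fun i => (p.count i : ℝ)

/-- `p` is a prefix of the infinite sequence `x`. -/
def IsPrefixSeq {d : ℕ} (p : List (Fin d)) (x : ℕ → Fin d) : Prop :=
  ∀ j < p.length, p.getD j (x 0) = x j

/-- The Rauzy fractal of `σ` in the representation space `w^⊥`. -/
noncomputable def RauzyFractal {d : ℕ} (s : ℕ → Fin d → List (Fin d)) (u w : Fin d → ℝ) :
    Set (Fin d → ℝ) :=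
  closure {y | ∃ p x, IsLimitSeq s x ∧ IsPrefixSeq p x ∧ y = projUW u w (abel p)}

/-- The subtile `R_w(i)` of the Rauzy fractal. -/
noncomputable def RauzySubtile {d : ℕ} (s : ℕ → Fin d → List (Fin d)) (u w : Fin d → ℝ)
    (i : Fin d) : Set (Fin d → ℝ) :=
  closure {y | ∃ p x, IsLimitSeq s x ∧ IsPrefixSeq (p ++ [i]) x ∧ y = projUW u w (abel p)}

open Filter Topology Set
open scoped Matrix

lemma Subadditive.bddBelow_range_div_of_neg_le {u v : ℕ → ℝ} (hv : Subadditive v)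
    (h : ∀ n, -v n ≤ u n) : BddBelow (range fun n => u n / n) := by
  refine ⟨min 0 (-v 1 - v 0), ?_⟩
  rintro _ ⟨n, rfl⟩
  rcases Nat.eq_zero_or_pos n with rfl | hn
  · simp
  have hv0 : 0 ≤ v 0 := by linarith [hv 0 0]
  have hvn : v n ≤ n * v 1 + v 0 := by simpa using hv.apply_mul_add_le n 1 0
  have hn1 : (1 : ℝ) ≤ n := by exact_mod_cast hn
  have hn' : (0 : ℝ) < n := by exact_mod_cast hn
  calc min 0 (-v 1 - v 0) ≤ -v 1 - v 0 := min_le_right _ _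
    _ ≤ u n / n := by rw [le_div_iff₀ hn']; nlinarith [h n]

theorem exists_abs_sub_mul_le_of_abs_add_sub_le {a : ℕ → ℝ} {C : ℝ}
    (h : ∀ m n, |a (m + n) - a m - a n| ≤ C) : ∃ α, ∀ n, |a n - n * α| ≤ C := by
  have hC : |a 0| ≤ C := by simpa using h 0 0
  have hb : Subadditive (fun n => a n + C) := fun m n => by
    linarith [(abs_le.mp (h m n)).2]
  have hc : Subadditive (fun n => -a n + C) := fun m n => by
    linarith [(abs_le.mp (h m n)).1]
  have hb_bdd := hc.bddBelow_range_div_of_neg_le (u := fun n => a n + C)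
    (fun n => by linarith [abs_nonneg (a 0)])
  have hc_bdd := hb.bddBelow_range_div_of_neg_le (u := fun n => -a n + C)
    (fun n => by linarith [abs_nonneg (a 0)])
  have hsum : hb.lim + hc.lim = 0 := by
    have hlim := (hb.tendsto_lim hb_bdd).add (hc.tendsto_lim hc_bdd)
    have hzero : Tendsto (fun n : ℕ => (a n + C) / n + (-a n + C) / n) atTop (𝓝 0) := by
      have : Tendsto (fun n : ℕ => 2 * C / n) atTop (𝓝 0) :=
        tendsto_const_nhds.div_atTop tendsto_natCast_atTop_atTop
      refine this.congr fun n => ?_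
      ring
    exact tendsto_nhds_unique hlim hzero
  refine ⟨hb.lim, fun n => ?_⟩
  rcases eq_or_ne n 0 with rfl | hn
  · simpa using hC
  have hn' : (0 : ℝ) < n := by exact_mod_cast Nat.pos_of_ne_zero hn
  have h1 := hb.lim_le_div hb_bdd hn
  have h2 := hc.lim_le_div hc_bdd hn
  rw [le_div_iff₀ hn'] at h1 h2
  rw [abs_le]
  constructor <;> nlinarith

lemma tendsto_inv_smul_of_norm_sub_smul_le {E : Type*} [NormedAddCommGroup E] [NormedSpace ℝ E]
    {v : ℕ → E} {α : E} {K : ℝ} (h : ∀ n, ‖v n - (n : ℝ) • α‖ ≤ K) :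
    Tendsto (fun n : ℕ => (n : ℝ)⁻¹ • v n) atTop (𝓝 α) := by
  rw [tendsto_iff_norm_sub_tendsto_zero]
  refine squeeze_zero' (Eventually.of_forall fun _ => norm_nonneg _) ?_
    ((tendsto_const_nhds (x := K)).div_atTop tendsto_natCast_atTop_atTop)
  filter_upwards [eventually_ne_atTop 0] with n hn
  have hn' : (0 : ℝ) < n := by exact_mod_cast Nat.pos_of_ne_zero hn
  rw [show (n : ℝ)⁻¹ • v n - α = (n : ℝ)⁻¹ • (v n - (n : ℝ) • α) by
    rw [smul_sub, smul_smul, inv_mul_cancel₀ hn'.ne', one_smul], norm_smul,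
    Real.norm_of_nonneg (inv_nonneg.mpr hn'.le), inv_mul_eq_div]
  exact div_le_div_of_nonneg_right (h n) hn'.le

section Lists

variable {α : Type*}

lemma List.IsPrefix.getD_eq {l₁ l₂ : List α} (h : l₁ <+: l₂) {j : ℕ} (hj : j < l₁.length)
    (z z' : α) : l₁.getD j z = l₂.getD j z' := by
  rw [List.getD_eq_getElem _ _ hj, List.getD_eq_getElem _ _ (hj.trans_le h.length_le),
    h.getElem hj]

lemma List.exists_eq_flatMap_take_append {β : Type*} {f : α → List β} {B : ℕ}
    (hB : ∀ a, (f a).length ≤ B) :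
    ∀ {L : List α} {p : List β}, p <+: L.flatMap f →
      ∃ k ≤ L.length, ∃ r, r.length ≤ B ∧ p = (L.take k).flatMap f ++ r
  | [], p, h => ⟨0, le_rfl, [], by simp, by simpa using h⟩
  | a :: L, p, h => by
    rw [List.flatMap_cons] at h
    rcases le_total p.length (f a).length with hp | hp
    · exact ⟨0, by simp, p, hp.trans (hB a), by simp⟩
    · obtain ⟨p', rfl⟩ := List.prefix_of_prefix_length_le (List.prefix_append _ _) h hp
      obtain ⟨k, hk, r, hr, rfl⟩ :=
        List.exists_eq_flatMap_take_append hB ((List.prefix_append_right_inj _).mp h)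
      exact ⟨k + 1, by simpa using hk, r, hr, by simp⟩

lemma List.mul_le_length_flatMap {β : Type*} {g : α → List β} {L : ℕ} (hg : ∀ a, L ≤ (g a).length)
    (l : List α) : l.length * L ≤ (l.flatMap g).length := by
  rw [List.length_flatMap, ← smul_eq_mul, ← List.length_map (f := fun a => (g a).length)]
  exact List.card_nsmul_le_sum _ _ (by simpa using fun a _ => hg a)

lemma List.card_le_length_of_forall_mem [Fintype α] {l : List α} (h : ∀ a, a ∈ l) :
    Fintype.card α ≤ l.length := by
  classical
  calc Fintype.card α = (Finset.univ : Finset α).card := rfl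
    _ ≤ l.toFinset.card := Finset.card_le_card fun i _ => List.mem_toFinset.mpr (h i)
    _ ≤ l.length := List.toFinset_card_le l

end Lists

section InitSeg

variable {α : Type*}

def initSeg (x : ℕ → α) (n : ℕ) : List α := (List.range n).map x

@[simp] lemma length_initSeg (x : ℕ → α) (n : ℕ) : (initSeg x n).length = n := by
  simp [initSeg]

@[simp] lemma getElem_initSeg (x : ℕ → α) {n j : ℕ} (h : j < (initSeg x n).length) :
    (initSeg x n)[j] = x j := by
  simp [initSeg]

lemma take_initSeg (x : ℕ → α) (m n : ℕ) : (initSeg x n).take m = initSeg x (min m n) := by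
  simp [initSeg, ← List.map_take, List.take_range]

lemma initSeg_prefix_initSeg (x : ℕ → α) {m n : ℕ} (h : m ≤ n) : initSeg x m <+: initSeg x n := by
  rw [← min_eq_left h, ← take_initSeg]
  exact List.take_prefix _ _

end InitSeg

section

variable {d : ℕ}

lemma isPrefixSeq_initSeg (x : ℕ → Fin d) (n : ℕ) : IsPrefixSeq (initSeg x n) x := by
  intro j hj
  rw [List.getD_eq_getElem _ _ hj, getElem_initSeg]

lemma isPrefixSeq_iff {p : List (Fin d)} {x : ℕ → Fin d} :
    IsPrefixSeq p x ↔ p = initSeg x p.length := by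
  refine ⟨fun h => List.ext_getElem (by simp) fun j hj _ => ?_, fun h => ?_⟩
  · rw [getElem_initSeg, ← List.getD_eq_getElem p (x 0) hj]
    exact h j hj
  · rw [h]
    exact isPrefixSeq_initSeg x _

lemma IsPrefixSeq.of_prefix {p q : List (Fin d)} {x : ℕ → Fin d} (hq : IsPrefixSeq q x)
    (h : p <+: q) : IsPrefixSeq p x := by
  intro j hj
  rw [h.getD_eq hj _ (x 0)]
  exact hq j (hj.trans_le h.length_le)

lemma IsPrefixSeq.prefix_of_length_le {p q : List (Fin d)} {x : ℕ → Fin d}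
    (hp : IsPrefixSeq p x) (hq : IsPrefixSeq q x) (h : p.length ≤ q.length) : p <+: q := by
  rw [isPrefixSeq_iff.mp hp, isPrefixSeq_iff.mp hq]
  exact initSeg_prefix_initSeg x h

lemma isPrefixSeq_flatMap_initSeg {f : Fin d → List (Fin d)} (hf : ∀ a, f a ≠ [])
    (y : ℕ → Fin d) (k : ℕ) : IsPrefixSeq ((initSeg y k).flatMap f) (subApplyG f y) := by
  intro j hj
  have hlong : j < ((initSeg y (j + 1)).flatMap f).length := by
    simpa using List.mul_le_length_flatMap (L := 1) (fun a => List.length_pos_iff.mpr (hf a))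
      (initSeg y (j + 1))
  change _ = ((initSeg y (j + 1)).flatMap f).getD j (y 0)
  rcases le_total k (j + 1) with h | h
  · exact ((initSeg_prefix_initSeg y h).flatMap f).getD_eq hj _ _
  · exact (((initSeg_prefix_initSeg y h).flatMap f).getD_eq hlong _ _).symm

def IsLimitSystem (s : ℕ → Fin d → List (Fin d)) (ws : ℕ → ℕ → Fin d) : Prop :=
  ∀ n, ws n = subApplyG (s n) (ws (n + 1))

lemma isLimitSeq_iff {s : ℕ → Fin d → List (Fin d)} {x : ℕ → Fin d} :
    IsLimitSeq s x ↔ ∃ ws, IsLimitSystem s ws ∧ ws 0 = x :=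
  ⟨fun ⟨ws, h0, h⟩ => ⟨ws, h, h0⟩, fun ⟨ws, h, h0⟩ => ⟨ws, h0, h⟩⟩

lemma continuous_subApplyG (f : Fin d → List (Fin d)) : Continuous (subApplyG f) := by
  refine continuous_pi fun j => ?_
  let g : (Fin (j + 1) → Fin d) → Fin d := fun z =>
    ((List.ofFn z).flatMap f).getD j (z 0)
  have : (fun y => subApplyG f y j) = g ∘ fun y i => y i := by
    funext y
    have hmap : (List.range (j + 1)).map y = List.ofFn (fun i : Fin (j + 1) => y i) :=
      List.ext_getElem (by simp) fun i _ _ => by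
        simp only [List.getElem_map, List.getElem_range, List.getElem_ofFn]
    simp only [g, subApplyG, hmap, Function.comp_apply, Fin.val_zero]
  rw [this]
  exact continuous_of_discreteTopology.comp (continuous_pi fun i => continuous_apply _)

theorem exists_isLimitSystem [NeZero d] (s : ℕ → Fin d → List (Fin d)) :
    ∃ ws, IsLimitSystem s ws := by
  let t : ℕ → Set (ℕ → ℕ → Fin d) := fun N =>
    {ws | ∀ n < N, ws n = subApplyG (s n) (ws (n + 1))}
  have hclosed : ∀ N, IsClosed (t N) := fun N => by
    simp only [t, Set.ofPred_forall]
    exact isClosed_biInter fun n _ => isClosed_eq (continuous_apply n)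
      ((continuous_subApplyG (s n)).comp (continuous_apply (n + 1)))
  have hne : ∀ N, (t N).Nonempty := fun N => by
    -- `D k` is level `N - k` of the system generated downwards from a constant word at level `N`
    let D : ℕ → ℕ → Fin d := fun k =>
      Nat.rec (fun _ => 0) (fun k y => subApplyG (s (N - (k + 1))) y) k
    refine ⟨fun n => D (N - n), fun n hn => ?_⟩
    have : N - n = (N - (n + 1)) + 1 := by omega
    simp only [this, D]
    congr 2
    omega
  obtain ⟨ws, hws⟩ := IsCompact.nonempty_iInter_of_sequence_nonempty_isCompact_isClosed t
    (fun N ws h n hn => h n (by omega)) hne ((hclosed 0).isCompact) hclosed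
  exact ⟨ws, fun n => Set.mem_iInter.mp hws (n + 1) n (by omega)⟩

section SadicWords

variable {s : ℕ → Fin d → List (Fin d)}

lemma sadicWord_ne_nil (hne : ∀ n a, s n a ≠ []) (m : ℕ) (a : Fin d) : sadicWord s m a ≠ [] := by
  induction m generalizing a with
  | zero => simp [sadicWord]
  | succ m ih =>
    obtain ⟨b, hb⟩ := List.exists_mem_of_ne_nil _ (hne m a)
    simpa [sadicWord] using ⟨b, hb, ih b⟩

variable (s) in
lemma sadicWord_add (N m : ℕ) (a : Fin d) :
    sadicWord s (N + m) a = (sadicWord (fun k => s (N + k)) m a).flatMap (sadicWord s N) := by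
  induction m generalizing a with
  | zero => simp [sadicWord]
  | succ m ih =>
    rw [← Nat.add_assoc, sadicWord, sadicWord, List.flatMap_assoc]
    exact congrArg (List.flatMap · _) (funext ih)

lemma IsLimitSystem.isPrefixSeq_flatMap_sadicWord (hne : ∀ n a, s n a ≠ [])
    {ws : ℕ → ℕ → Fin d} (hws : IsLimitSystem s ws) (m k : ℕ) :
    IsPrefixSeq ((initSeg (ws m) k).flatMap (sadicWord s m)) (ws 0) := by
  induction m generalizing k with
  | zero => simpa [sadicWord] using isPrefixSeq_initSeg (ws 0) k
  | succ m ih =>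
    have hstep := isPrefixSeq_flatMap_initSeg (hne m) (ws (m + 1)) k
    rw [← hws m, isPrefixSeq_iff] at hstep
    rw [show sadicWord s (m + 1) = fun a => (s m a).flatMap (sadicWord s m) from rfl,
      ← List.flatMap_assoc, hstep]
    exact ih _

lemma IsLimitSystem.isPrefixSeq_sadicWord (hne : ∀ n a, s n a ≠ [])
    {ws : ℕ → ℕ → Fin d} (hws : IsLimitSystem s ws) (m : ℕ) :
    IsPrefixSeq (sadicWord s m (ws m 0)) (ws 0) := by
  simpa [initSeg] using hws.isPrefixSeq_flatMap_sadicWord hne m 1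

end SadicWords

section Abelianization

@[simp] lemma abel_nil : abel ([] : List (Fin d)) = 0 := by
  funext i; simp [abel]

lemma abel_append (p q : List (Fin d)) : abel (p ++ q) = abel p + abel q := by
  funext i; simp [abel, List.count_append]

lemma abel_cons (a : Fin d) (l : List (Fin d)) : abel (a :: l) = Pi.single a 1 + abel l := by
  funext i
  simp only [abel, List.count_cons, Pi.add_apply, Pi.single_apply, beq_iff_eq, @eq_comm _ i a]
  push_cast; ring

lemma abel_nonneg (p : List (Fin d)) (i : Fin d) : 0 ≤ abel p i := Nat.cast_nonneg _

lemma abel_le_length (p : List (Fin d)) (i : Fin d) : abel p i ≤ p.length :=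
  Nat.cast_le.mpr List.count_le_length

lemma sum_abel (p : List (Fin d)) : ∑ i, abel p i = p.length := by
  induction p with
  | nil => simp
  | cons a p ih => simp [abel_cons, Finset.sum_add_distrib, ih, add_comm]

lemma abel_flatMap {f : Fin d → List (Fin d)} {M : Matrix (Fin d) (Fin d) ℝ}
    (hf : ∀ a, abel (f a) = M.col a) (l : List (Fin d)) : abel (l.flatMap f) = M *ᵥ abel l := by
  induction l with
  | nil => simp
  | cons a l ih => rw [List.flatMap_cons, abel_append, abel_cons, Matrix.mulVec_add,
      Matrix.mulVec_single_one, hf, ih]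

end Abelianization

section IncidenceMatrices

variable {s : ℕ → Fin d → List (Fin d)}

lemma incZProd_zero_succ (s : ℕ → Fin d → List (Fin d)) (m : ℕ) :
    incZProd s 0 (m + 1) = incZProd s 0 m * incZ s m := by
  simp [incZProd, List.range_succ]

lemma incZProd_shift (s : ℕ → Fin d → List (Fin d)) (N m : ℕ) :
    incZProd (fun k => s (N + k)) 0 m = incZProd s N (N + m) := by
  simp [incZProd, incZ]

lemma abel_sadicWord (s : ℕ → Fin d → List (Fin d)) (m : ℕ) (a : Fin d) :
    abel (sadicWord s m a) = ((incZProd s 0 m).map (fun z : ℤ => (z : ℝ))).col a := by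
  induction m generalizing a with
  | zero =>
    funext i
    simp only [sadicWord, abel, incZProd, List.count_singleton, beq_iff_eq]
    simp [Matrix.one_apply, @eq_comm _ a i]
  | succ m ih =>
    have hs : abel (s m a) = ((incZ s m).map (fun z : ℤ => (z : ℝ))).col a := by
      funext i; simp [abel, incZ]
    rw [sadicWord, abel_flatMap ih, hs, incZProd_zero_succ]
    funext i
    simp [Matrix.mulVec, dotProduct, Matrix.mul_apply]

lemma mem_sadicWord_shift_of_pos {N n : ℕ} (hNn : N ≤ n) (h : ∀ i j, 0 < incZProd s N n i j)
    (i a : Fin d) : i ∈ sadicWord (fun k => s (N + k)) (n - N) a := by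
  have hcount := congrFun (abel_sadicWord (fun k => s (N + k)) (n - N) a) i
  rw [incZProd_shift, Nat.add_sub_cancel' hNn] at hcount
  have : (0 : ℝ) < abel (sadicWord (fun k => s (N + k)) (n - N) a) i := by
    rw [hcount, Matrix.col_apply, Matrix.map_apply]; exact_mod_cast h i a
  exact List.count_pos_iff.mp (Nat.cast_pos.mp this)

end IncidenceMatrices

section Language

variable {s : ℕ → Fin d → List (Fin d)}

theorem exists_le_length_sadicWord
    (hprim : ∀ m : ℕ, ∃ n > m, ∀ i j, 0 < incZProd s m n i j) (hd : 2 ≤ d) (L : ℕ) :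
    ∃ m, ∀ a, L ≤ (sadicWord s m a).length := by
  suffices ∀ k, ∃ m, ∀ a, 2 ^ k ≤ (sadicWord s m a).length from
    (this L).imp fun m hm a => (Nat.lt_two_pow_self).le.trans (hm a)
  intro k
  induction k with
  | zero => exact ⟨0, fun a => by simp [sadicWord]⟩
  | succ k ih =>
    obtain ⟨m, hm⟩ := ih
    obtain ⟨n, hmn, hpos⟩ := hprim m
    refine ⟨n, fun a => ?_⟩
    have hblock := List.card_le_length_of_forall_mem fun i =>
      mem_sadicWord_shift_of_pos hmn.le hpos i a
    rw [← Nat.add_sub_cancel' hmn.le, sadicWord_add]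
    calc 2 ^ (k + 1) ≤ (sadicWord (fun k => s (m + k)) (n - m) a).length * 2 ^ k := by
          rw [pow_succ']; exact Nat.mul_le_mul_right _ (hd.trans (by simpa using hblock))
      _ ≤ _ := List.mul_le_length_flatMap hm _

lemma InLang.of_infix {v w : List (Fin d)} (hv : InLang s v) (h : w <:+: v) : InLang s w :=
  let ⟨n, a, hva⟩ := hv
  ⟨n, a, h.trans hva⟩

variable (hne : ∀ n a, s n a ≠ []) (hprim : ∀ m : ℕ, ∃ n > m, ∀ i j, 0 < incZProd s m n i j)
  {ws : ℕ → ℕ → Fin d} (hws : IsLimitSystem s ws)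
include hne hprim hws

lemma IsLimitSystem.inLang_of_isPrefixSeq (hd : 2 ≤ d) {p : List (Fin d)}
    (hp : IsPrefixSeq p (ws 0)) : InLang s p := by
  obtain ⟨m, hm⟩ := exists_le_length_sadicWord hprim hd p.length
  exact ⟨m, ws m 0,
    (hp.prefix_of_length_le (hws.isPrefixSeq_sadicWord hne m) (hm _)).isInfix⟩

lemma IsLimitSystem.exists_isPrefixSeq_append_of_inLang {v : List (Fin d)} (hv : InLang s v) :
    ∃ p, IsPrefixSeq (p ++ v) (ws 0) := by
  obtain ⟨N, a, hva⟩ := hv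
  obtain ⟨n, hNn, hpos⟩ := hprim N
  have hmem := mem_sadicWord_shift_of_pos hNn.le hpos a (ws n 0)
  have hpre := hws.isPrefixSeq_sadicWord hne n
  rw [← Nat.add_sub_cancel' hNn.le, sadicWord_add, Nat.add_sub_cancel' hNn.le] at hpre
  obtain ⟨p, q, hpq⟩ := hva.trans (List.infix_flatMap_of_mem hmem (sadicWord s N))
  exact ⟨p, hpre.of_prefix ⟨q, hpq⟩⟩

end Language

def IsBalanced (s : ℕ → Fin d → List (Fin d)) (C : ℕ) : Prop :=
  ∀ v v' : List (Fin d), InLang s v → InLang s v' →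
    v.length = v'.length → ∀ i, |(v.count i : ℤ) - (v'.count i : ℤ)| ≤ (C : ℤ)

section Frequencies

variable {s : ℕ → Fin d → List (Fin d)} {C : ℕ}

lemma IsBalanced.abs_abel_sub_le (hbal : IsBalanced s C) {v v' : List (Fin d)} (hv : InLang s v)
    (hv' : InLang s v') (hlen : v.length = v'.length) (i : Fin d) :
    |abel v i - abel v' i| ≤ C := by
  have := hbal v v' hv hv' hlen i
  simp only [abel]
  exact_mod_cast this

variable (hne : ∀ n a, s n a ≠ []) (hprim : ∀ m : ℕ, ∃ n > m, ∀ i j, 0 < incZProd s m n i j)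
  {ws : ℕ → ℕ → Fin d} (hws : IsLimitSystem s ws)

include hne hprim hws in
lemma IsLimitSystem.abs_abel_initSeg_add_sub_le (hd : 2 ≤ d) (hbal : IsBalanced s C)
    (m n : ℕ) (i : Fin d) :
    |abel (initSeg (ws 0) (m + n)) i - abel (initSeg (ws 0) m) i - abel (initSeg (ws 0) n) i|
      ≤ C := by
  set w := (initSeg (ws 0) (m + n)).drop m
  have hsplit : initSeg (ws 0) (m + n) = initSeg (ws 0) m ++ w := by
    rw [← List.take_append_drop m (initSeg (ws 0) (m + n)), take_initSeg, min_eq_left (by omega)]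
  have hw : InLang s w :=
    (hws.inLang_of_isPrefixSeq hne hprim hd (isPrefixSeq_initSeg _ _)).of_infix
      (List.drop_suffix _ _).isInfix
  have hlen : w.length = (initSeg (ws 0) n).length := by simp [w]
  rw [hsplit, abel_append, Pi.add_apply, add_sub_cancel_left]
  exact hbal.abs_abel_sub_le hw (hws.inLang_of_isPrefixSeq hne hprim hd (isPrefixSeq_initSeg _ _))
    hlen i

include hne hprim hws in
theorem IsLimitSystem.exists_norm_abel_initSeg_sub_smul_le (hd : 2 ≤ d) (hbal : IsBalanced s C) :
    ∃ α : Fin d → ℝ, ∀ n, ‖abel (initSeg (ws 0) n) - (n : ℝ) • α‖ ≤ C := by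
  choose α hα using fun i => exists_abs_sub_mul_le_of_abs_add_sub_le
    (a := fun n => abel (initSeg (ws 0) n) i)
    (hws.abs_abel_initSeg_add_sub_le hne hprim hd hbal · · i)
  exact ⟨α, fun n => (pi_norm_le_iff_of_nonneg C.cast_nonneg).mpr fun i => hα i n⟩

include hne hws in
lemma IsLimitSystem.exists_abel_initSeg_eq (m n : ℕ) :
    ∃ k ≤ n, ∃ r : List (Fin d), r.length ≤ ∑ a, (sadicWord s m a).length ∧
      abel (initSeg (ws 0) n) =
        ((incZProd s 0 m).map (fun z : ℤ => (z : ℝ))) *ᵥ abel (initSeg (ws m) k) + abel r := by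
  have hpre := hws.isPrefixSeq_flatMap_sadicWord hne m n
  have hlong : n ≤ ((initSeg (ws m) n).flatMap (sadicWord s m)).length := by
    simpa using List.mul_le_length_flatMap (L := 1)
      (fun a => List.length_pos_iff.mpr (sadicWord_ne_nil hne m a)) (initSeg (ws m) n)
  obtain ⟨k, hk, r, hr, heq⟩ := List.exists_eq_flatMap_take_append
    (fun a => Finset.single_le_sum (f := fun a => (sadicWord s m a).length)
      (fun _ _ => Nat.zero_le _) (Finset.mem_univ a))
    ((isPrefixSeq_initSeg (ws 0) n).prefix_of_length_le hpre (by simpa using hlong))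
  refine ⟨k, by simpa using hk, r, hr, ?_⟩
  rw [heq, abel_append, take_initSeg, min_eq_left (by simpa using hk),
    abel_flatMap (abel_sadicWord s m)]

include hne hws in
lemma IsLimitSystem.mem_image_mulVec_of_norm_sub_le {α : Fin d → ℝ} {K : ℝ}
    (hα : ∀ n, ‖abel (initSeg (ws 0) n) - (n : ℝ) • α‖ ≤ K) (m : ℕ) :
    α ∈ (fun x => ((incZProd s 0 m).map (fun z : ℤ => (z : ℝ))) *ᵥ x) ''
      {x : Fin d → ℝ | ∀ i, 0 ≤ x i} := by
  set M := (incZProd s 0 m).map (fun z : ℤ => (z : ℝ))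
  set B : ℕ := ∑ a, (sadicWord s m a).length
  choose k hk r hr heq using hws.exists_abel_initSeg_eq hne m
  have hclosed : IsClosed ((fun x => M *ᵥ x) '' Icc 0 1) :=
    (isCompact_Icc.image (by fun_prop)).isClosed
  have hr_norm : ∀ n, ‖abel (r n)‖ ≤ B := fun n =>
    (pi_norm_le_iff_of_nonneg B.cast_nonneg).mpr fun i => by
      rw [Real.norm_of_nonneg (abel_nonneg _ _)]
      exact (abel_le_length _ i).trans (by exact_mod_cast hr n)
  have htend : Tendsto (fun n : ℕ => (n : ℝ)⁻¹ • (abel (initSeg (ws 0) n) - abel (r n)))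
      atTop (𝓝 α) := by
    refine tendsto_inv_smul_of_norm_sub_smul_le (K := K + B) fun n => ?_
    rw [sub_right_comm]
    exact (norm_sub_le _ _).trans (add_le_add (hα n) (hr_norm n))
  have hmem : ∀ n : ℕ, (n : ℝ)⁻¹ • (abel (initSeg (ws 0) n) - abel (r n)) ∈
      (fun x => M *ᵥ x) '' Icc 0 1 := fun n => by
    refine ⟨(n : ℝ)⁻¹ • abel (initSeg (ws m) (k n)), ⟨fun i => ?_, fun i => ?_⟩, ?_⟩
    · exact mul_nonneg (inv_nonneg.mpr n.cast_nonneg) (abel_nonneg _ _)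
    · rcases eq_or_ne n 0 with rfl | hn
      · simp
      · refine inv_mul_le_one_of_le₀ ((abel_le_length _ i).trans ?_) n.cast_nonneg
        simpa using hk n
    · simp [M, Matrix.mulVec_smul, heq n]
  exact Set.image_mono (fun x hx i => hx.1 i)
    (hclosed.mem_of_tendsto htend (Eventually.of_forall hmem))

end Frequencies

section Projection

variable {u w : Fin d → ℝ}

lemma projUW_sub (x y : Fin d → ℝ) :
    projUW u w (x - y) = projUW u w x - projUW u w y := by
  simp only [projUW, Pi.sub_apply, sub_mul, Finset.sum_sub_distrib, sub_div, sub_smul]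
  abel

lemma projUW_add_smul_self (hS : ∑ i, u i * w i ≠ 0) (x : Fin d → ℝ) (t : ℝ) :
    projUW u w (x + t • u) = projUW u w x := by
  simp only [projUW, Pi.add_apply, Pi.smul_apply, smul_eq_mul, add_mul, Finset.sum_add_distrib,
    mul_assoc, ← Finset.mul_sum, add_div, mul_div_cancel_right₀ _ hS, add_smul]
  abel

lemma projUW_of_sum_eq_zero {x : Fin d → ℝ} (h : ∑ i, x i * w i = 0) : projUW u w x = x := by
  simp [projUW, h]

lemma continuous_projUW : Continuous (projUW u w) := by
  unfold projUW
  fun_prop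

lemma sum_mul_pos_of_pos (hu : ∀ i, 0 < u i) (hw : ∀ i, 0 ≤ w i) (hw0 : w ≠ 0) :
    0 < ∑ i, u i * w i := by
  obtain ⟨i, hi⟩ := Function.ne_iff.mp hw0
  exact Finset.sum_pos' (fun j _ => mul_nonneg (hu j).le (hw j))
    ⟨i, Finset.mem_univ i, mul_pos (hu i) ((hw i).lt_of_ne' hi)⟩

end Projection

section RauzyFractal

variable {s : ℕ → Fin d → List (Fin d)} {u : Fin d → ℝ}

lemma isCompact_rauzyFractal_of_forall_mem {w : Fin d → ℝ} {K : Set (Fin d → ℝ)}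
    (hK : IsCompact K) (h : ∀ p x, IsLimitSeq s x → IsPrefixSeq p x → projUW u w (abel p) ∈ K) :
    IsCompact (RauzyFractal s u w) ∧ ∀ i, IsCompact (RauzySubtile s u w i) :=
  ⟨hK.closure_of_subset (by rintro _ ⟨p, x, hx, hp, rfl⟩; exact h p x hx hp),
    fun i => hK.closure_of_subset (by
      rintro _ ⟨p, x, hx, hp, rfl⟩
      exact h p x hx (hp.of_prefix (p.prefix_append [i])))⟩

lemma isCompact_rauzyFractal_of_le_one (hd : d ≤ 1) (hupos : ∀ i, 0 < u i) {w : Fin d → ℝ}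
    (hw : ∀ i, 0 ≤ w i) (hw0 : w ≠ 0) :
    IsCompact (RauzyFractal s u w) ∧ ∀ i, IsCompact (RauzySubtile s u w i) := by
  refine isCompact_rauzyFractal_of_forall_mem (isCompact_singleton (x := 0)) fun p _ _ _ => ?_
  obtain ⟨i₀, -⟩ := Function.ne_iff.mp hw0
  have hsub : ∀ i : Fin d, i = i₀ := fun i => Fin.ext (by omega)
  have hline : abel p = 0 + (abel p i₀ / u i₀) • u := by
    funext i
    rw [hsub i]
    simp [div_mul_cancel₀ _ (hupos i₀).ne']
  rw [Set.mem_singleton_iff, hline, projUW_add_smul_self (sum_mul_pos_of_pos hupos hw hw0).ne',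
    projUW_of_sum_eq_zero (by simp)]

lemma isBalanced_of_le_one (hd : d ≤ 1) : IsBalanced s 0 := by
  intro v v' _ _ hlen i
  have hcount : ∀ l : List (Fin d), l.count i = l.length := fun l =>
    List.count_eq_length.mpr fun b _ => Fin.ext (by omega)
  simp [hcount, hlen]

variable (hne : ∀ n a, s n a ≠ []) (hprim : ∀ m : ℕ, ∃ n > m, ∀ i j, 0 < incZProd s m n i j)
  (hd : 2 ≤ d)
include hne hprim hd

theorem isBalanced_of_isCompact_rauzyFractal (hcomp : IsCompact (RauzyFractal s u 1)) :
    ∃ C, IsBalanced s C := by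
  have : NeZero d := ⟨by omega⟩
  obtain ⟨ws, hws⟩ := exists_isLimitSystem s
  obtain ⟨B, hB⟩ := hcomp.isBounded.subset_closedBall 0
  have hprefix : ∀ p, IsPrefixSeq p (ws 0) → ‖projUW u 1 (abel p)‖ ≤ B := fun p hp => by
    simpa using hB (subset_closure ⟨p, ws 0, isLimitSeq_iff.mpr ⟨ws, hws, rfl⟩, hp, rfl⟩)
  have hfactor : ∀ v, InLang s v → ‖projUW u 1 (abel v)‖ ≤ 2 * B := fun v hv => by
    obtain ⟨p, hp⟩ := hws.exists_isPrefixSeq_append_of_inLang hne hprim hv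
    rw [show abel v = abel (p ++ v) - abel p by rw [abel_append]; abel, projUW_sub, two_mul]
    exact (norm_sub_le _ _).trans
      (add_le_add (hprefix _ hp) (hprefix _ (hp.of_prefix (List.prefix_append _ _))))
  refine ⟨⌈4 * B⌉₊, fun v v' hv hv' hlen i => ?_⟩
  have hdiff : abel v - abel v' = projUW u 1 (abel v) - projUW u 1 (abel v') := by
    rw [← projUW_sub, projUW_of_sum_eq_zero]
    simp [Finset.sum_sub_distrib, sum_abel, hlen]
  have hbound : |abel v i - abel v' i| ≤ 4 * B :=
    calc |abel v i - abel v' i| = ‖(abel v - abel v') i‖ := rfl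
      _ ≤ ‖abel v - abel v'‖ := norm_le_pi_norm _ i
      _ ≤ 2 * B + 2 * B :=
          hdiff ▸ (norm_sub_le _ _).trans (add_le_add (hfactor v hv) (hfactor v' hv'))
      _ = 4 * B := by ring
  have := hbound.trans (Nat.le_ceil _)
  simp only [abel] at this
  exact_mod_cast this

theorem isCompact_rauzyFractal_of_isBalanced (hupos : ∀ i, 0 < u i)
    (hcone : (⋂ n : ℕ,
        (fun x => ((incZProd s 0 n).map (fun z : ℤ => (z : ℝ))) *ᵥ x) ''
          {x : Fin d → ℝ | ∀ i, 0 ≤ x i})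
      ⊆ {x : Fin d → ℝ | ∃ t : ℝ, 0 ≤ t ∧ x = t • u})
    {C : ℕ} (hbal : IsBalanced s C) {w : Fin d → ℝ} (hw : ∀ i, 0 ≤ w i) (hw0 : w ≠ 0) :
    IsCompact (RauzyFractal s u w) ∧ ∀ i, IsCompact (RauzySubtile s u w i) := by
  refine isCompact_rauzyFractal_of_forall_mem
    ((isCompact_closedBall 0 (C : ℝ)).image (continuous_projUW (u := u) (w := w)))
    fun p x hx hp => ?_
  obtain ⟨ws, hws, rfl⟩ := isLimitSeq_iff.mp hx
  obtain ⟨α, hα⟩ := hws.exists_norm_abel_initSeg_sub_smul_le hne hprim hd hbal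
  obtain ⟨c, -, rfl⟩ := hcone (Set.mem_iInter.mpr (hws.mem_image_mulVec_of_norm_sub_le hne hα))
  have hp_bound := hα p.length
  rw [← isPrefixSeq_iff.mp hp, smul_smul] at hp_bound
  refine ⟨abel p - ((p.length : ℝ) * c) • u, by simpa using hp_bound, ?_⟩
  rw [sub_eq_add_neg, ← neg_smul, projUW_add_smul_self (sum_mul_pos_of_pos hupos hw hw0).ne']

end RauzyFractal

end

theorem stmt15_general {d : ℕ} (s : ℕ → Fin d → List (Fin d))
    (hne : ∀ n a, s n a ≠ [])
    (hprim : ∀ m : ℕ, ∃ n > m, ∀ i j, 0 < incZProd s m n i j)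
    (u : Fin d → ℝ) (hupos : ∀ i, 0 < u i)
    (heig : (⋂ n : ℕ,
        (fun x => ((incZProd s 0 n).map (fun z : ℤ => (z : ℝ))).mulVec x) ''
          {x : Fin d → ℝ | ∀ i, 0 ≤ x i})
      = {x : Fin d → ℝ | ∃ t : ℝ, 0 ≤ t ∧ x = t • u}) :
    (∀ w : Fin d → ℝ, (∀ i, 0 ≤ w i) → w ≠ 0 →
        IsCompact (RauzyFractal s u w) ∧ ∀ i, IsCompact (RauzySubtile s u w i))
      ↔ ∃ C : ℕ, ∀ v v' : List (Fin d), InLang s v → InLang s v' →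
          v.length = v'.length → ∀ i, |(v.count i : ℤ) - (v'.count i : ℤ)| ≤ (C : ℤ) := by
  rcases le_or_gt d 1 with hd | hd
  · exact iff_of_true (fun w hw hw0 => isCompact_rauzyFractal_of_le_one hd hupos hw hw0)
      ⟨0, isBalanced_of_le_one hd⟩
  refine ⟨fun h => ?_, fun ⟨C, hbal⟩ w hw hw0 =>
    isCompact_rauzyFractal_of_isBalanced hne hprim hd hupos heig.le hbal hw hw0⟩
  have hone : (1 : Fin d → ℝ) ≠ 0 := Function.ne_iff.mpr ⟨⟨0, by omega⟩, one_ne_zero⟩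
  exact isBalanced_of_isCompact_rauzyFractal hne hprim hd (h 1 (fun _ => zero_le_one) hone).1

/-- For a primitive and recurrent sequence of unimodular substitutions with generalized
right eigenvector `u`, the Rauzy fractal `R_w` and all its subtiles are compact for all
`w ∈ ℝ^d_{≥0} \ {0}` if and only if the language `L_σ` is finitely balanced. -/
theorem stmt15 {d : ℕ} (s : ℕ → Fin d → List (Fin d))
    (hne : ∀ n a, s n a ≠ [])
    (hprim : ∀ m : ℕ, ∃ n > m, ∀ i j, 0 < incZProd s m n i j)
    (hrec : ∀ m : ℕ, ∃ n ≥ 1, ∀ k < m, incZ s k = incZ s (n + k))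
    (hunimod : ∀ n, (incZ s n).det = 1 ∨ (incZ s n).det = -1)
    (u : Fin d → ℝ) (hupos : ∀ i, 0 < u i)
    (heig : (⋂ n : ℕ,
        (fun x => ((incZProd s 0 n).map (fun z : ℤ => (z : ℝ))).mulVec x) ''
          {x : Fin d → ℝ | ∀ i, 0 ≤ x i})
      = {x : Fin d → ℝ | ∃ t : ℝ, 0 ≤ t ∧ x = t • u}) :
    (∀ w : Fin d → ℝ, (∀ i, 0 ≤ w i) → w ≠ 0 →
        IsCompact (RauzyFractal s u w) ∧ ∀ i, IsCompact (RauzySubtile s u w i))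
      ↔ ∃ C : ℕ, ∀ v v' : List (Fin d), InLang s v → InLang s v' →
          v.length = v'.length → ∀ i, |(v.count i : ℤ) - (v'.count i : ℤ)| ≤ (C : ℤ) :=
  stmt15_general s hne hprim u hupos heig
end
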